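/- arXiv:2408.13982 — 2 statements merged into one kernel-verified Lean document; each statement's English description precedes it below -/
import Mathlib

section
/- Let Ω ⊆ ℝ² be open, connected, and closed under positive scaling, let q : Ω → ℝ be smooth and positively homogeneous of degree 1 (q(τx,τy) = τ q(x,y) for τ > 0), with q_xy ≠ 0 everywhere on Ω. Suppose Sˣ, Sʸ : Ω → ℝ are smooth and satisfy on Ω: (E1) ∂_y Sˣ + ∂_x Sʸ = 4 q_x q_y; (E2) ∂_x Sˣ = 2 q_x²; (E3) ∂_y Sʸ = 2 q_y². Then there exist constants Cˣ, Cʸ ∈ ℝ such that x(Sˣ − Cˣ) + y(Sʸ − Cʸ) = 2 q² on Ω, and moreover Sˣ − Cˣ and Sʸ − Cʸ are positively homogeneous of degree 1, i.e. x ∂_x(Sˣ − Cˣ) + y ∂_y(Sˣ − Cˣ) = Sˣ − Cˣ and x ∂_x(Sʸ − Cʸ) + y ∂_y(Sʸ − Cʸ) = Sʸ − Cʸ on Ω. -/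
open Real Set

/-!
Let `E = x ∂ₓ + y ∂ᵧ`. Homogeneity of `q` gives Euler's identity `E q = q`, and since
`∂ (E f) = ∂ f + E (∂ f)` for each partial derivative `∂` (symmetry of second derivatives),
differentiating it gives `E q_x = E q_y = 0`. Differentiating (E1)–(E3) once more shows that the
Hessians of `Sˣ` and `Sʸ` are `4 q_x` and `4 q_y` times the Hessian of `q`, hence
`E (∂ Sˣ) = E (∂ Sʸ) = 0`. By the same commutation rule `E Sˣ - Sˣ` and `E Sʸ - Sʸ` have zero
gradient, so they are constant on the connected set `Ω`; these constants give `Cˣ, Cʸ`. Finally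
`x (Sˣ - Cˣ) + y (Sʸ - Cʸ) = x E Sˣ + y E Sʸ = 2 (x q_x + y q_y)² = 2 q²` by (E1)–(E3).
-/

/-- Partial derivative in the first variable. -/
noncomputable def px (f : ℝ × ℝ → ℝ) : ℝ × ℝ → ℝ :=
  fun p => deriv (fun t => f (t, p.2)) p.1

/-- Partial derivative in the second variable. -/
noncomputable def py (f : ℝ × ℝ → ℝ) : ℝ × ℝ → ℝ :=
  fun p => deriv (fun t => f (p.1, t)) p.2

open Filter Topology

section PartialDerivatives

variable {f g : ℝ × ℝ → ℝ} {p : ℝ × ℝ}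

theorem hasDerivAt_px (hf : DifferentiableAt ℝ f p) :
    HasDerivAt (fun t => f (t, p.2)) (px f p) p.1 :=
  (hf.comp p.1 ((hasDerivAt_id _).prodMk (hasDerivAt_const _ _)).differentiableAt).hasDerivAt

theorem hasDerivAt_py (hf : DifferentiableAt ℝ f p) :
    HasDerivAt (fun t => f (p.1, t)) (py f p) p.2 :=
  (hf.comp p.2 ((hasDerivAt_const _ _).prodMk (hasDerivAt_id _)).differentiableAt).hasDerivAt

theorem px_eq_fderiv (hf : DifferentiableAt ℝ f p) : px f p = fderiv ℝ f p (1, 0) :=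
  (hf.hasFDerivAt.comp_hasDerivAt p.1 ((hasDerivAt_id _).prodMk (hasDerivAt_const _ _))).deriv

theorem py_eq_fderiv (hf : DifferentiableAt ℝ f p) : py f p = fderiv ℝ f p (0, 1) :=
  (hf.hasFDerivAt.comp_hasDerivAt p.2 ((hasDerivAt_const _ _).prodMk (hasDerivAt_id _))).deriv

theorem fderiv_apply_eq_px_py (hf : DifferentiableAt ℝ f p) (v : ℝ × ℝ) :
    fderiv ℝ f p v = v.1 * px f p + v.2 * py f p := by
  have hv : v = v.1 • ((1 : ℝ), (0 : ℝ)) + v.2 • ((0 : ℝ), (1 : ℝ)) := by ext <;> simp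
  rw [hv, map_add, map_smul, map_smul, ← px_eq_fderiv hf, ← py_eq_fderiv hf]
  simp

theorem Filter.EventuallyEq.px_eq (h : f =ᶠ[𝓝 p] g) : px f p = px g p :=
  (h.comp_tendsto (Continuous.tendsto' (by fun_prop) p.1 p rfl)).deriv_eq

theorem Filter.EventuallyEq.py_eq (h : f =ᶠ[𝓝 p] g) : py f p = py g p :=
  (h.comp_tendsto (Continuous.tendsto' (by fun_prop) p.2 p rfl)).deriv_eq

theorem px_sub_const (c : ℝ) : px (fun z => f z - c) = px f :=
  funext fun _ => deriv_sub_const ..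

theorem py_sub_const (c : ℝ) : py (fun z => f z - c) = py f :=
  funext fun _ => deriv_sub_const ..

theorem ContDiffAt.eventuallyEq_px_fderiv (hf : ContDiffAt ℝ 2 f p) :
    px f =ᶠ[𝓝 p] fun z => fderiv ℝ f z (1, 0) :=
  (hf.eventually (by simp)).mono fun _ hz => px_eq_fderiv (hz.differentiableAt two_ne_zero)

theorem ContDiffAt.eventuallyEq_py_fderiv (hf : ContDiffAt ℝ 2 f p) :
    py f =ᶠ[𝓝 p] fun z => fderiv ℝ f z (0, 1) :=
  (hf.eventually (by simp)).mono fun _ hz => py_eq_fderiv (hz.differentiableAt two_ne_zero)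

theorem ContDiffAt.differentiableAt_fderiv (hf : ContDiffAt ℝ 2 f p) :
    DifferentiableAt ℝ (fderiv ℝ f) p :=
  (hf.fderiv_right (m := 1) (by norm_num)).differentiableAt one_ne_zero

theorem ContDiffAt.differentiableAt_px (hf : ContDiffAt ℝ 2 f p) :
    DifferentiableAt ℝ (px f) p :=
  (hf.differentiableAt_fderiv.clm_apply (differentiableAt_const _)).congr_of_eventuallyEq
    hf.eventuallyEq_px_fderiv

theorem ContDiffAt.differentiableAt_py (hf : ContDiffAt ℝ 2 f p) :
    DifferentiableAt ℝ (py f) p :=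
  (hf.differentiableAt_fderiv.clm_apply (differentiableAt_const _)).congr_of_eventuallyEq
    hf.eventuallyEq_py_fderiv

theorem ContDiffAt.px_py_comm (hf : ContDiffAt ℝ 2 f p) : px (py f) p = py (px f) p := by
  have hd := hf.differentiableAt_fderiv
  rw [hf.eventuallyEq_py_fderiv.px_eq, hf.eventuallyEq_px_fderiv.py_eq,
    px_eq_fderiv (hd.clm_apply (differentiableAt_const _)),
    py_eq_fderiv (hd.clm_apply (differentiableAt_const _)),
    fderiv_clm_apply hd (differentiableAt_const _), fderiv_clm_apply hd (differentiableAt_const _)]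
  simpa using hf.isSymmSndFDerivAt (by simp [minSmoothness_of_isRCLikeNormedField]) (1, 0) (0, 1)

theorem px_two_mul_sq (hf : DifferentiableAt ℝ f p) :
    px (fun z => 2 * f z ^ 2) p = 4 * f p * px f p := by
  rw [show px (fun z => 2 * f z ^ 2) p = _ from (((hasDerivAt_px hf).pow 2).const_mul 2).deriv]
  push_cast
  ring

theorem py_two_mul_sq (hf : DifferentiableAt ℝ f p) :
    py (fun z => 2 * f z ^ 2) p = 4 * f p * py f p := by
  rw [show py (fun z => 2 * f z ^ 2) p = _ from (((hasDerivAt_py hf).pow 2).const_mul 2).deriv]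
  push_cast
  ring

end PartialDerivatives

section Euler

variable {f g : ℝ × ℝ → ℝ} {p : ℝ × ℝ}

noncomputable def euler (f : ℝ × ℝ → ℝ) (z : ℝ × ℝ) : ℝ := z.1 * px f z + z.2 * py f z

theorem euler_sub_const (c : ℝ) : euler (fun z => f z - c) = euler f := by
  funext z
  rw [euler, euler, px_sub_const, py_sub_const]

theorem Filter.EventuallyEq.euler_eq (h : f =ᶠ[𝓝 p] g) : euler f p = euler g p := by
  rw [euler, euler, h.px_eq, h.py_eq]

theorem euler_eq_of_homogeneous (hf : DifferentiableAt ℝ f p)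
    (hhom : ∀ τ : ℝ, 0 < τ → f (τ * p.1, τ * p.2) = τ * f p) : euler f p = f p := by
  have hray : HasDerivAt (fun τ : ℝ => ((τ * p.1, τ * p.2) : ℝ × ℝ)) p 1 := by
    simpa using ((hasDerivAt_id (1 : ℝ)).mul_const p.1).prodMk
      ((hasDerivAt_id (1 : ℝ)).mul_const p.2)
  have hf' : DifferentiableAt ℝ f ((1 : ℝ) * p.1, (1 : ℝ) * p.2) := by simpa using hf
  have hcomp : HasDerivAt (fun τ : ℝ => f (τ * p.1, τ * p.2)) (fderiv ℝ f p p) 1 := by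
    simpa [Function.comp_def] using hf'.hasFDerivAt.comp_hasDerivAt 1 hray
  have hlin : HasDerivAt (fun τ : ℝ => f (τ * p.1, τ * p.2)) (f p) 1 := by
    refine (by simpa using (hasDerivAt_id (1 : ℝ)).mul_const (f p) :
      HasDerivAt (fun τ : ℝ => τ * f p) (f p) 1).congr_of_eventuallyEq ?_
    filter_upwards [Ioi_mem_nhds one_pos] with τ hτ using hhom τ hτ
  rw [euler, ← fderiv_apply_eq_px_py hf]
  exact hcomp.unique hlin

theorem ContDiffAt.differentiableAt_euler (hf : ContDiffAt ℝ 2 f p) :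
    DifferentiableAt ℝ (euler f) p :=
  (differentiableAt_fst.mul hf.differentiableAt_px).add
    (differentiableAt_snd.mul hf.differentiableAt_py)

theorem ContDiffAt.px_euler (hf : ContDiffAt ℝ 2 f p) :
    px (euler f) p = px f p + euler (px f) p := by
  have h := ((hasDerivAt_id p.1).mul (hasDerivAt_px hf.differentiableAt_px)).add
    ((hasDerivAt_const p.1 p.2).mul (hasDerivAt_px hf.differentiableAt_py))
  rw [show px (euler f) p = _ from h.deriv, euler, ← hf.px_py_comm]
  simp only [id, one_mul, zero_mul, zero_add]
  ring

theorem ContDiffAt.py_euler (hf : ContDiffAt ℝ 2 f p) :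
    py (euler f) p = py f p + euler (py f) p := by
  have h := ((hasDerivAt_const p.2 p.1).mul (hasDerivAt_py hf.differentiableAt_px)).add
    ((hasDerivAt_id p.2).mul (hasDerivAt_py hf.differentiableAt_py))
  rw [show py (euler f) p = _ from h.deriv, euler, hf.px_py_comm]
  simp only [id, one_mul, zero_mul, zero_add]
  ring

theorem ContDiffAt.euler_px_eq_zero (hf : ContDiffAt ℝ 2 f p) (h : euler f =ᶠ[𝓝 p] f) :
    euler (px f) p = 0 := by
  linarith [hf.px_euler, h.px_eq]

theorem ContDiffAt.euler_py_eq_zero (hf : ContDiffAt ℝ 2 f p) (h : euler f =ᶠ[𝓝 p] f) :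
    euler (py f) p = 0 := by
  linarith [hf.py_euler, h.py_eq]

theorem euler_eq_of_eventuallyEq_two_mul_sq (hg : DifferentiableAt ℝ g p)
    (h : f =ᶠ[𝓝 p] fun z => 2 * g z ^ 2) : euler f p = 4 * g p * euler g p := by
  rw [h.euler_eq, euler, euler, px_two_mul_sq hg, py_two_mul_sq hg]
  ring

theorem IsOpen.exists_euler_eq_sub_const {Ω : Set (ℝ × ℝ)} (hΩ : IsOpen Ω)
    (hconn : IsPreconnected Ω) (hf : ∀ p ∈ Ω, ContDiffAt ℝ 2 f p)
    (hx : ∀ p ∈ Ω, euler (px f) p = 0) (hy : ∀ p ∈ Ω, euler (py f) p = 0) :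
    ∃ C, ∀ p ∈ Ω, euler f p = f p - C := by
  have hG : ∀ p ∈ Ω, DifferentiableAt ℝ (fun z => euler f z - f z) p := fun p hp =>
    (hf p hp).differentiableAt_euler.sub ((hf p hp).differentiableAt two_ne_zero)
  have hfderiv : EqOn (fderiv ℝ (fun z => euler f z - f z)) 0 Ω := by
    intro p hp
    have hpx : px (fun z => euler f z - f z) p = 0 := by
      rw [show px (fun z => euler f z - f z) p = _ from
        ((hasDerivAt_px (hf p hp).differentiableAt_euler).sub
          (hasDerivAt_px ((hf p hp).differentiableAt two_ne_zero))).deriv]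
      linarith [(hf p hp).px_euler, hx p hp]
    have hpy : py (fun z => euler f z - f z) p = 0 := by
      rw [show py (fun z => euler f z - f z) p = _ from
        ((hasDerivAt_py (hf p hp).differentiableAt_euler).sub
          (hasDerivAt_py ((hf p hp).differentiableAt two_ne_zero))).deriv]
      linarith [(hf p hp).py_euler, hy p hp]
    refine ContinuousLinearMap.ext fun v => ?_
    rw [fderiv_apply_eq_px_py (hG p hp), hpx, hpy]
    simp
  obtain ⟨c, hc⟩ := hΩ.exists_is_const_of_fderiv_eq_zero hconn
    (fun p hp => (hG p hp).differentiableWithinAt) hfderiv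
  exact ⟨-c, fun p hp => by linarith [hc p hp]⟩

end Euler

section Resolvents

variable {q Sx Sy : ℝ × ℝ → ℝ} {p : ℝ × ℝ}

theorem euler_py_of_resolvent_eqs (hq : ContDiffAt ℝ 2 q p) (hSx : ContDiffAt ℝ 2 Sx p)
    (hSy : ContDiffAt ℝ 2 Sy p) (hE1 : ∀ᶠ z in 𝓝 p, py Sx z + px Sy z = 4 * px q z * py q z)
    (hE2 : px Sx =ᶠ[𝓝 p] fun z => 2 * px q z ^ 2)
    (hE3 : py Sy =ᶠ[𝓝 p] fun z => 2 * py q z ^ 2) :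
    euler (py Sx) p = 4 * px q p * euler (py q) p := by
  have hxy : px (py Sx) p = 4 * px q p * py (px q) p := by
    rw [hSx.px_py_comm, hE2.py_eq, py_two_mul_sq hq.differentiableAt_px]
  have hyx : py (px Sy) p = 4 * py q p * px (py q) p := by
    rw [← hSy.px_py_comm, hE3.px_eq, px_two_mul_sq hq.differentiableAt_py]
  have hE1' : py Sx =ᶠ[𝓝 p] fun z => 4 * px q z * py q z - px Sy z :=
    hE1.mono fun z hz => eq_sub_of_add_eq hz
  have hyy : py (py Sx) p
      = 4 * py (px q) p * py q p + 4 * px q p * py (py q) p - py (px Sy) p := by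
    rw [hE1'.py_eq]
    exact ((((hasDerivAt_py hq.differentiableAt_px).const_mul 4).mul
      (hasDerivAt_py hq.differentiableAt_py)).sub (hasDerivAt_py hSy.differentiableAt_px)).deriv
  rw [euler, euler, hxy, hyy, hyx, hq.px_py_comm]
  ring

theorem euler_px_of_resolvent_eqs (hq : ContDiffAt ℝ 2 q p) (hSx : ContDiffAt ℝ 2 Sx p)
    (hSy : ContDiffAt ℝ 2 Sy p) (hE1 : ∀ᶠ z in 𝓝 p, py Sx z + px Sy z = 4 * px q z * py q z)
    (hE2 : px Sx =ᶠ[𝓝 p] fun z => 2 * px q z ^ 2)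
    (hE3 : py Sy =ᶠ[𝓝 p] fun z => 2 * py q z ^ 2) :
    euler (px Sy) p = 4 * py q p * euler (px q) p := by
  have hyx : py (px Sy) p = 4 * py q p * px (py q) p := by
    rw [← hSy.px_py_comm, hE3.px_eq, px_two_mul_sq hq.differentiableAt_py]
  have hxy : px (py Sx) p = 4 * px q p * py (px q) p := by
    rw [hSx.px_py_comm, hE2.py_eq, py_two_mul_sq hq.differentiableAt_px]
  have hE1' : px Sy =ᶠ[𝓝 p] fun z => 4 * px q z * py q z - py Sx z :=
    hE1.mono fun z hz => eq_sub_of_add_eq' hz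
  have hxx : px (px Sy) p
      = 4 * px (px q) p * py q p + 4 * px q p * px (py q) p - px (py Sx) p := by
    rw [hE1'.px_eq]
    exact ((((hasDerivAt_px hq.differentiableAt_px).const_mul 4).mul
      (hasDerivAt_px hq.differentiableAt_py)).sub (hasDerivAt_px hSx.differentiableAt_py)).deriv
  rw [euler, euler, hxx, hyx, hxy, hq.px_py_comm]
  ring

end Resolvents

theorem resolvents_homogeneous_general
    (Ω : Set (ℝ × ℝ)) (hΩ : IsOpen Ω) (hconn : IsConnected Ω)
    (q Sx Sy : ℝ × ℝ → ℝ)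
    (hq : ContDiffOn ℝ (⊤ : ℕ∞) q Ω)
    (hhom : ∀ p ∈ Ω, ∀ τ : ℝ, 0 < τ → q (τ * p.1, τ * p.2) = τ * q p)
    (hSx : ContDiffOn ℝ (⊤ : ℕ∞) Sx Ω)
    (hSy : ContDiffOn ℝ (⊤ : ℕ∞) Sy Ω)
    (hE1 : ∀ p ∈ Ω, py Sx p + px Sy p = 4 * px q p * py q p)
    (hE2 : ∀ p ∈ Ω, px Sx p = 2 * (px q p) ^ 2)
    (hE3 : ∀ p ∈ Ω, py Sy p = 2 * (py q p) ^ 2) :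
    ∃ Cx Cy : ℝ, ∀ p ∈ Ω,
      p.1 * (Sx p - Cx) + p.2 * (Sy p - Cy) = 2 * (q p) ^ 2 ∧
      p.1 * px (fun z => Sx z - Cx) p + p.2 * py (fun z => Sx z - Cx) p = Sx p - Cx ∧
      p.1 * px (fun z => Sy z - Cy) p + p.2 * py (fun z => Sy z - Cy) p = Sy p - Cy := by
  have near : ∀ {P : ℝ × ℝ → Prop}, (∀ z ∈ Ω, P z) → ∀ p ∈ Ω, ∀ᶠ z in 𝓝 p, P z :=
    fun h p hp => eventually_of_mem (hΩ.mem_nhds hp) h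
  have hC2 : ∀ {f : ℝ × ℝ → ℝ}, ContDiffOn ℝ (⊤ : ℕ∞) f Ω → ∀ p ∈ Ω, ContDiffAt ℝ 2 f p :=
    fun hf p hp => (hf.contDiffAt (hΩ.mem_nhds hp)).of_le (WithTop.coe_le_coe.2 le_top)
  have hEuler : ∀ p ∈ Ω, euler q p = q p := fun p hp =>
    euler_eq_of_homogeneous ((hC2 hq p hp).differentiableAt two_ne_zero) (hhom p hp)
  have hqx : ∀ p ∈ Ω, euler (px q) p = 0 := fun p hp =>
    (hC2 hq p hp).euler_px_eq_zero (near hEuler p hp)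
  have hqy : ∀ p ∈ Ω, euler (py q) p = 0 := fun p hp =>
    (hC2 hq p hp).euler_py_eq_zero (near hEuler p hp)
  obtain ⟨Cx, hCx⟩ := hΩ.exists_euler_eq_sub_const hconn.isPreconnected (hC2 hSx)
    (fun p hp => by
      rw [euler_eq_of_eventuallyEq_two_mul_sq (hC2 hq p hp).differentiableAt_px
        (near hE2 p hp), hqx p hp, mul_zero])
    (fun p hp => by
      rw [euler_py_of_resolvent_eqs (hC2 hq p hp) (hC2 hSx p hp) (hC2 hSy p hp) (near hE1 p hp)
        (near hE2 p hp) (near hE3 p hp), hqy p hp, mul_zero])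
  obtain ⟨Cy, hCy⟩ := hΩ.exists_euler_eq_sub_const hconn.isPreconnected (hC2 hSy)
    (fun p hp => by
      rw [euler_px_of_resolvent_eqs (hC2 hq p hp) (hC2 hSx p hp) (hC2 hSy p hp) (near hE1 p hp)
        (near hE2 p hp) (near hE3 p hp), hqx p hp, mul_zero])
    (fun p hp => by
      rw [euler_eq_of_eventuallyEq_two_mul_sq (hC2 hq p hp).differentiableAt_py
        (near hE3 p hp), hqy p hp, mul_zero])
  refine ⟨Cx, Cy, fun p hp => ⟨?_, ?_, ?_⟩⟩
  · rw [← hCx p hp, ← hCy p hp, ← hEuler p hp]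
    simp only [euler]
    linear_combination p.1 * p.2 * hE1 p hp + p.1 ^ 2 * hE2 p hp + p.2 ^ 2 * hE3 p hp
  · exact (congrFun (euler_sub_const Cx) p).trans (hCx p hp)
  · exact (congrFun (euler_sub_const Cy) p).trans (hCy p hp)

/-- for `q` homogeneous of degree 1 with `q_xy ≠ 0`, resolvents satisfying
(E1)–(E3) satisfy `x(Sˣ − Cˣ) + y(Sʸ − Cʸ) = 2q²` for some constants, and the shifted
resolvents are homogeneous of degree 1. -/
theorem resolvents_homogeneous
    (Ω : Set (ℝ × ℝ)) (hΩ : IsOpen Ω) (hconn : IsConnected Ω)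
    (hscale : ∀ p ∈ Ω, ∀ τ : ℝ, 0 < τ → (τ * p.1, τ * p.2) ∈ Ω)
    (q Sx Sy : ℝ × ℝ → ℝ)
    (hq : ContDiffOn ℝ (⊤ : ℕ∞) q Ω)
    (hhom : ∀ p ∈ Ω, ∀ τ : ℝ, 0 < τ → q (τ * p.1, τ * p.2) = τ * q p)
    (hqxy : ∀ p ∈ Ω, py (px q) p ≠ 0)
    (hSx : ContDiffOn ℝ (⊤ : ℕ∞) Sx Ω)
    (hSy : ContDiffOn ℝ (⊤ : ℕ∞) Sy Ω)
    (hE1 : ∀ p ∈ Ω, py Sx p + px Sy p = 4 * px q p * py q p)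
    (hE2 : ∀ p ∈ Ω, px Sx p = 2 * (px q p) ^ 2)
    (hE3 : ∀ p ∈ Ω, py Sy p = 2 * (py q p) ^ 2) :
    ∃ Cx Cy : ℝ, ∀ p ∈ Ω,
      p.1 * (Sx p - Cx) + p.2 * (Sy p - Cy) = 2 * (q p) ^ 2 ∧
      p.1 * px (fun z => Sx z - Cx) p + p.2 * py (fun z => Sx z - Cx) p = Sx p - Cx ∧
      p.1 * px (fun z => Sy z - Cy) p + p.2 * py (fun z => Sy z - Cy) p = Sy p - Cy :=
  resolvents_homogeneous_general Ω hΩ hconn q Sx Sy hq hhom hSx hSy hE1 hE2 hE3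
end

section
/- Let Ω ⊆ ℝ² be open, let u, v : Ω → ℝ be C¹ functions whose gradients are everywhere parallel, i.e. (∂_y u)(∂_x v) = (∂_x u)(∂_y v) on Ω, and let p ∈ Ω be a point such that ∇u is nonvanishing on a neighborhood of p. Then there exist r > 0 with the ball B_r(p) ⊆ Ω and a single-variable function θ : ℝ → ℝ such that v = θ ∘ u on B_r(p). -/
/-!
Where `∂ₓu(p) ≠ 0` (otherwise swap the variables), the map `g(x, y) = (u(x, y), y)` has
invertible derivative, so the inverse function theorem gives a local inverse `Ψ`. Parallel
gradients mean that `Dv` kills the kernel of `Du`, which `Dg` maps onto the `y`-axis; hence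
`v ∘ Ψ` has vanishing `y`-derivative, is constant in `y` on a ball around `g(p)`, and
`θ(c) = v(Ψ(c, p.2))` works.
-/

open Real Set Metric

open Filter Topology

theorem px_eq_fderiv_apply {f : ℝ × ℝ → ℝ} {z : ℝ × ℝ} (hf : DifferentiableAt ℝ f z) :
    px f z = fderiv ℝ f z (1, 0) :=
  (hf.hasFDerivAt.comp_hasDerivAt (x := z.1)
    ((hasDerivAt_id _).prodMk (hasDerivAt_const _ z.2))).deriv

theorem py_eq_fderiv_apply {f : ℝ × ℝ → ℝ} {z : ℝ × ℝ} (hf : DifferentiableAt ℝ f z) :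
    py f z = fderiv ℝ f z (0, 1) :=
  (hf.hasFDerivAt.comp_hasDerivAt (x := z.2)
    ((hasDerivAt_const _ z.1).prodMk (hasDerivAt_id _))).deriv

theorem px_comp_swap (f : ℝ × ℝ → ℝ) (z : ℝ × ℝ) :
    px (f ∘ Prod.swap) z = py f z.swap := rfl

theorem py_comp_swap (f : ℝ × ℝ → ℝ) (z : ℝ × ℝ) :
    py (f ∘ Prod.swap) z = px f z.swap := rfl

theorem eventually_eq_of_py_eq_zero {H : ℝ × ℝ → ℝ} {q : ℝ × ℝ}
    (hH : ∀ᶠ z in 𝓝 q, DifferentiableAt ℝ H z ∧ py H z = 0) :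
    ∀ᶠ z in 𝓝 q, H z = H (z.1, q.2) := by
  obtain ⟨s, hs, hball⟩ := eventually_nhds_iff_ball.mp hH
  filter_upwards [ball_mem_nhds q hs] with z hz
  have hslice : ∀ t ∈ ball q.2 s, (z.1, t) ∈ ball q s := fun t ht => by
    rw [← ball_prod_same] at hz ⊢
    exact ⟨hz.1, ht⟩
  refine isOpen_ball.is_const_of_deriv_eq_zero (f := fun t => H (z.1, t)) isPreconnected_ball
    (fun t ht => ?_) (fun t ht => (hball _ (hslice t ht)).2) ?_ (mem_ball_self hs)
  · exact ((hball _ (hslice t ht)).1.comp t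
      (differentiableAt_const _ |>.prodMk differentiableAt_id)).differentiableWithinAt
  · rw [← ball_prod_same] at hz
    exact hz.2

namespace ContinuousLinearMap

theorem apply_eq_fst_mul_add_snd_mul (L : ℝ × ℝ →L[ℝ] ℝ) (k : ℝ × ℝ) :
    L k = k.1 * L (1, 0) + k.2 * L (0, 1) := by
  have hk : k = k.1 • ((1 : ℝ), (0 : ℝ)) + k.2 • ((0 : ℝ), (1 : ℝ)) := by ext <;> simp
  rw [hk, map_add, map_smul, map_smul, smul_eq_mul, smul_eq_mul]
  simp

theorem apply_eq_zero_of_parallel {L M : ℝ × ℝ →L[ℝ] ℝ} (hL : L (1, 0) ≠ 0)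
    (hpar : L (0, 1) * M (1, 0) = L (1, 0) * M (0, 1)) {k : ℝ × ℝ} (hk : L k = 0) :
    M k = 0 := by
  rw [apply_eq_fst_mul_add_snd_mul] at hk ⊢
  refine (mul_eq_zero.mp ?_).resolve_left hL
  linear_combination M (1, 0) * hk - k.2 * hpar

theorem injective_prod_snd {L : ℝ × ℝ →L[ℝ] ℝ} (hL : L (1, 0) ≠ 0) :
    Function.Injective (L.prod (snd ℝ ℝ ℝ)) := by
  refine (injective_iff_map_eq_zero _).mpr fun k hk => ?_
  have hk₂ : k.2 = 0 := congrArg Prod.snd hk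
  have hk₁ : L k = 0 := congrArg Prod.fst hk
  rw [apply_eq_fst_mul_add_snd_mul, hk₂, zero_mul, add_zero, mul_eq_zero] at hk₁
  exact Prod.ext (hk₁.resolve_right hL) hk₂

/-- The derivative of the straightening map `z ↦ (u z, z.2)` at a point where `Du = L`. -/
noncomputable def straighteningEquiv (L : ℝ × ℝ →L[ℝ] ℝ) (hL : L (1, 0) ≠ 0) :
    (ℝ × ℝ) ≃L[ℝ] ℝ × ℝ :=
  (LinearEquiv.ofInjectiveEndo (L.prod (snd ℝ ℝ ℝ) : ℝ × ℝ →ₗ[ℝ] ℝ × ℝ)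
    (injective_prod_snd hL)).toContinuousLinearEquiv

theorem coe_straighteningEquiv (L : ℝ × ℝ →L[ℝ] ℝ) (hL : L (1, 0) ≠ 0) :
    (straighteningEquiv L hL : ℝ × ℝ →L[ℝ] ℝ × ℝ) = L.prod (snd ℝ ℝ ℝ) := rfl

theorem apply_straighteningEquiv_symm_eq_zero {L M : ℝ × ℝ →L[ℝ] ℝ} (hL : L (1, 0) ≠ 0)
    (hpar : L (0, 1) * M (1, 0) = L (1, 0) * M (0, 1)) :
    M ((straighteningEquiv L hL).symm (0, 1)) = 0 :=
  apply_eq_zero_of_parallel hL hpar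
    (congrArg Prod.fst ((straighteningEquiv L hL).apply_symm_apply (0, 1)))

end ContinuousLinearMap

open ContinuousLinearMap in
theorem exists_eventually_eq_comp_of_px_ne_zero {u v : ℝ × ℝ → ℝ} {p : ℝ × ℝ}
    (hu : ContDiffAt ℝ 1 u p) (hv : ∀ᶠ z in 𝓝 p, DifferentiableAt ℝ v z)
    (hpar : ∀ᶠ z in 𝓝 p, py u z * px v z = px u z * py v z) (hx : px u p ≠ 0) :
    ∃ θ : ℝ → ℝ, ∀ᶠ z in 𝓝 p, v z = θ (u z) := by
  have hud : ∀ᶠ z in 𝓝 p, DifferentiableAt ℝ u z :=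
    (hu.eventually (by simp)).mono fun z hz => hz.differentiableAt one_ne_zero
  have hx' : fderiv ℝ u p (1, 0) ≠ 0 := by
    rwa [← px_eq_fderiv_apply (hu.differentiableAt one_ne_zero)]
  have hx_near : ∀ᶠ z in 𝓝 p, fderiv ℝ u z (1, 0) ≠ 0 :=
    ((hu.continuousAt_fderiv one_ne_zero).clm_apply continuousAt_const).eventually_ne hx'
  set g : ℝ × ℝ → ℝ × ℝ := fun z => (u z, z.2)
  have hg : ∀ z (hz : DifferentiableAt ℝ u z) (hne : fderiv ℝ u z (1, 0) ≠ 0),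
      HasFDerivAt g (straighteningEquiv _ hne : ℝ × ℝ →L[ℝ] ℝ × ℝ) z := fun z hz hne => by
    rw [coe_straighteningEquiv]
    exact hz.hasFDerivAt.prodMk hasFDerivAt_snd
  have hgp : HasStrictFDerivAt g (straighteningEquiv _ hx' : ℝ × ℝ →L[ℝ] ℝ × ℝ) p := by
    rw [coe_straighteningEquiv]
    exact (hu.hasStrictFDerivAt one_ne_zero).prodMk hasStrictFDerivAt_snd
  set Φ := hgp.toOpenPartialHomeomorph g
  have hpΦ : p ∈ Φ.source := hgp.mem_toOpenPartialHomeomorph_source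
  have hH : ∀ᶠ q in 𝓝 (g p), DifferentiableAt ℝ (v ∘ Φ.symm) q ∧ py (v ∘ Φ.symm) q = 0 := by
    filter_upwards [Φ.open_target.mem_nhds hgp.image_mem_toOpenPartialHomeomorph_target,
      (Φ.tendsto_symm hpΦ).eventually (hud.and (hx_near.and (hv.and hpar)))]
      with q hq ⟨hdu, hne, hdv, hparq⟩
    have hH := hdv.hasFDerivAt.comp q (Φ.hasFDerivAt_symm hq (hg _ hdu hne))
    refine ⟨hH.differentiableAt, ?_⟩
    rw [py_eq_fderiv_apply hH.differentiableAt, hH.fderiv]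
    refine apply_straighteningEquiv_symm_eq_zero hne ?_
    rwa [← px_eq_fderiv_apply hdu, ← py_eq_fderiv_apply hdu, ← px_eq_fderiv_apply hdv,
      ← py_eq_fderiv_apply hdv]
  refine ⟨fun c => v (Φ.symm (c, p.2)), ?_⟩
  filter_upwards [Φ.eventually_left_inverse hpΦ,
    hgp.continuousAt.eventually (eventually_eq_of_py_eq_zero hH)] with z hz hHz
  calc v z = v (Φ.symm (g z)) := (congrArg v hz).symm
    _ = v (Φ.symm (u z, p.2)) := hHz

theorem exists_eventually_eq_comp {u v : ℝ × ℝ → ℝ} {p : ℝ × ℝ}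
    (hu : ContDiffAt ℝ 1 u p) (hv : ∀ᶠ z in 𝓝 p, DifferentiableAt ℝ v z)
    (hpar : ∀ᶠ z in 𝓝 p, py u z * px v z = px u z * py v z)
    (hDu : px u p ≠ 0 ∨ py u p ≠ 0) :
    ∃ θ : ℝ → ℝ, ∀ᶠ z in 𝓝 p, v z = θ (u z) := by
  rcases hDu with hx | hy
  · exact exists_eventually_eq_comp_of_px_ne_zero hu hv hpar hx
  have hswap : Tendsto Prod.swap (𝓝 p.swap) (𝓝 p) := continuous_swap.tendsto' _ _ p.swap_swap
  have hswap_smooth : ContDiff ℝ 1 (Prod.swap : ℝ × ℝ → ℝ × ℝ) :=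
    contDiff_snd.prodMk contDiff_fst
  have hpar_swap : ∀ᶠ z in 𝓝 p.swap, py (u ∘ Prod.swap) z * px (v ∘ Prod.swap) z =
      px (u ∘ Prod.swap) z * py (v ∘ Prod.swap) z := by
    filter_upwards [hswap.eventually hpar] with z hz
    rw [px_comp_swap, py_comp_swap, px_comp_swap, py_comp_swap]
    linarith
  obtain ⟨θ, hθ⟩ := exists_eventually_eq_comp_of_px_ne_zero
    (hu.comp p.swap hswap_smooth.contDiffAt)
    ((hswap.eventually hv).mono fun z hz =>
      hz.comp z (hswap_smooth.differentiable one_ne_zero z))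
    hpar_swap hy
  refine ⟨θ, ((continuous_swap.tendsto p).eventually hθ).mono fun z hz => ?_⟩
  simpa using hz

/-- two C¹ functions with everywhere parallel gradients are locally
functionally dependent near a point where `∇u` does not vanish. -/
theorem parallel_gradients_functional_dependence
    (Ω : Set (ℝ × ℝ)) (hΩ : IsOpen Ω)
    (u v : ℝ × ℝ → ℝ)
    (hu : ContDiffOn ℝ 1 u Ω) (hv : ContDiffOn ℝ 1 v Ω)
    (hpar : ∀ p ∈ Ω, py u p * px v p = px u p * py v p)
    (p : ℝ × ℝ) (hp : p ∈ Ω)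
    (hnz : ∃ ε > 0, Metric.ball p ε ⊆ Ω ∧
      ∀ z ∈ Metric.ball p ε, ¬(px u z = 0 ∧ py u z = 0)) :
    ∃ r > 0, Metric.ball p r ⊆ Ω ∧
      ∃ θ : ℝ → ℝ, ∀ z ∈ Metric.ball p r, v z = θ (u z) := by
  obtain ⟨ε, hε, -, hne⟩ := hnz
  have hΩp : Ω ∈ 𝓝 p := hΩ.mem_nhds hp
  obtain ⟨θ, hθ⟩ := exists_eventually_eq_comp (hu.contDiffAt hΩp)
    (eventually_of_mem hΩp fun z hz => (hv.differentiableOn one_ne_zero).differentiableAt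
      (hΩ.mem_nhds hz))
    (eventually_of_mem hΩp hpar) (not_and_or.mp (hne p (mem_ball_self hε)))
  obtain ⟨r, hr, hball⟩ := eventually_nhds_iff_ball.mp (hθ.and hΩp)
  exact ⟨r, hr, fun z hz => (hball z hz).2, θ, fun z hz => (hball z hz).1⟩
end
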